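/- Preservation of data-flow edges implies equal assertion outcomes: let τ and τ' be two traces consisting of the same multiset of events such that τ' is a permutation of τ via π, and suppose for every position r and every v ∈ R(e_r), π(last_τ(r,v)) = last_{τ'}(π(r), v) (every read reads from the corresponding write). If each event's semantics depends only on its read set and the values it reads, then every event computes the same read values in τ' as in τ; in particular every assertion event that passes in τ passes in τ'. -/

import Mathlib

/-!
Process the reads of `τ` in an order in which every writer precedes its readers. A read from the
initial state sees `init` in both traces. A read from a writer `w` is mapped to a read from `π w`,
which is the same event; by induction it has read the same values on its read set, so by locality
it has written the same value. Assertion outcomes are functions of the values read.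
-/

namespace Trace

variable {ι κ Var α : Type*}

def IsExecution (R : ι → Finset Var) (last : ι → Var → Option ι)
    (wf : ι → (Var → α) → Var → α) (init : Var → α) (ρ : ι → Var → α) : Prop :=
  ∀ i v, v ∈ R i → ρ i v = (last i v).elim (init v) (fun w => wf w (ρ w) v)

-- Event `i` of `τ` sits at position `π i` of `τ'`, hence the read sets and semantics along `π.symm`.
theorem IsExecution.map_reads_eq [Preorder ι] [WellFoundedLT ι]
    {R W : ι → Finset Var} {π : ι ≃ κ} {last : ι → Var → Option ι}
    {last' : κ → Var → Option κ} {wf : ι → (Var → α) → Var → α} {init : Var → α}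
    {ρ : ι → Var → α} {ρ' : κ → Var → α}
    (hτ : IsExecution R last wf init ρ)
    (hτ' : IsExecution (fun p => R (π.symm p)) last' (fun q => wf (π.symm q)) init ρ')
    (hlt : ∀ i v w, last i v = some w → w < i)
    (hlastW : ∀ i v w, last i v = some w → v ∈ W w)
    (hloc : ∀ e (s s' : Var → α), (∀ v ∈ R e, s v = s' v) → ∀ v ∈ W e, wf e s v = wf e s' v)
    (hcorr : ∀ i v, v ∈ R i → (last i v).map π = last' (π i) v) (i : ι) :
    ∀ v ∈ R i, ρ' (π i) v = ρ i v := by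
  induction i using WellFoundedLT.induction with
  | ind i ih =>
    intro v hv
    rw [hτ' (π i) v (by simpa using hv), hτ i v hv, ← hcorr i v hv]
    cases hw : last i v with
    | none => rfl
    | some w =>
      simp only [Option.map_some, Option.elim_some, Equiv.symm_apply_apply]
      exact hloc w _ _ (ih w (hlt i v w hw)) v (hlastW i v w hw)

end Trace

theorem dataflow_preservation_implies_same_outcomes_general
    {n : ℕ} {Var : Type*}
    (R W : Fin n → Finset Var) (π : Equiv.Perm (Fin n))
    (last last' : Fin n → Var → Option (Fin n))
    (wf : Fin n → (Var → ℤ) → (Var → ℤ))  -- values written as a function of values read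
    (init : Var → ℤ)
    (ρ ρ' : Fin n → Var → ℤ)
    -- well-foundedness: writers precede readers in each trace
    (hlt : ∀ i v w, last i v = some w → w < i)
    -- last writers indeed write the variable
    (hlastW : ∀ i v w, last i v = some w → v ∈ W w)
    -- the written values depend only on the values read
    (hloc : ∀ e (s s' : Var → ℤ), (∀ v ∈ R e, s v = s' v) →
      ∀ v ∈ W e, wf e s v = wf e s' v)
    -- semantics of reads in τ : value of last write, or the initial value
    (hρ : ∀ i v, v ∈ R i →
      ρ i v = (last i v).elim (init v) (fun w => wf w (ρ w) v))
    -- semantics of reads in τ' (event at position p of τ' is π⁻¹ p)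
    (hρ' : ∀ p v, v ∈ R (π.symm p) →
      ρ' p v = (last' p v).elim (init v) (fun q => wf (π.symm q) (ρ' q) v))
    -- every read reads from the corresponding write (⊥ maps to ⊥)
    (hcorr : ∀ i v, v ∈ R i → (last i v).map π = last' (π i) v)
    -- an assertion outcome determined by the values read
    (pass : Fin n → (Var → ℤ) → Prop)
    (hpass : ∀ e (s s' : Var → ℤ), (∀ v ∈ R e, s v = s' v) → (pass e s ↔ pass e s')) :
    (∀ i v, v ∈ R i → ρ' (π i) v = ρ i v) ∧
    (∀ i, pass i (ρ i) → pass i (ρ' (π i))) := by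
  have same_reads : ∀ i, ∀ v ∈ R i, ρ' (π i) v = ρ i v :=
    Trace.IsExecution.map_reads_eq hρ hρ' hlt hlastW hloc hcorr
  exact ⟨same_reads, fun i hp => (hpass i _ _ fun v hv => (same_reads i v hv).symm).mp hp⟩

/-- Preservation of data-flow edges implies equal assertion outcomes.
Traces `τ` and `τ'` consist of the same events, with `τ'` a permutation of `τ`
via `π` (the event at position `p` of `τ'` is the event `π⁻¹ p` of `τ`).
`last r v` (resp. `last' p v`) is the position of the last writer of `v` before
the reader, or `none` for a read from the initial state.  `ρ i v` (resp.
`ρ' p v`) is the value read for `v ∈ R` by the event at that position; the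
values written by an event are a function `wf` of the values it reads,
depending only on the read set (deterministic local semantics).  If every read
reads from the corresponding write (`π` maps `last` to `last'`, and reads from
the initial state correspond), then every event computes the same read values
in `τ'` as in `τ`; in particular every assertion that passes in `τ` passes
in `τ'`. -/
theorem dataflow_preservation_implies_same_outcomes
    {n : ℕ} {Var : Type*} [DecidableEq Var]
    (R W : Fin n → Finset Var) (π : Equiv.Perm (Fin n))
    (last last' : Fin n → Var → Option (Fin n))
    (wf : Fin n → (Var → ℤ) → (Var → ℤ))  -- values written as a function of values read
    (init : Var → ℤ)
    (ρ ρ' : Fin n → Var → ℤ)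
    -- well-foundedness: writers precede readers in each trace
    (hlt : ∀ i v w, last i v = some w → w < i)
    (hlt' : ∀ p v q, last' p v = some q → q < p)
    -- last writers indeed write the variable
    (hlastW : ∀ i v w, last i v = some w → v ∈ W w)
    (hlast'W : ∀ p v q, last' p v = some q → v ∈ W (π.symm q))
    -- the written values depend only on the values read
    (hloc : ∀ e (s s' : Var → ℤ), (∀ v ∈ R e, s v = s' v) →
      ∀ v ∈ W e, wf e s v = wf e s' v)
    -- semantics of reads in τ : value of last write, or the initial value
    (hρ : ∀ i v, v ∈ R i →
      ρ i v = (last i v).elim (init v) (fun w => wf w (ρ w) v))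
    -- semantics of reads in τ' (event at position p of τ' is π⁻¹ p)
    (hρ' : ∀ p v, v ∈ R (π.symm p) →
      ρ' p v = (last' p v).elim (init v) (fun q => wf (π.symm q) (ρ' q) v))
    -- every read reads from the corresponding write (⊥ maps to ⊥)
    (hcorr : ∀ i v, v ∈ R i → (last i v).map π = last' (π i) v)
    -- an assertion outcome determined by the values read
    (pass : Fin n → (Var → ℤ) → Prop)
    (hpass : ∀ e (s s' : Var → ℤ), (∀ v ∈ R e, s v = s' v) → (pass e s ↔ pass e s')) :
    (∀ i v, v ∈ R i → ρ' (π i) v = ρ i v) ∧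
    (∀ i, pass i (ρ i) → pass i (ρ' (π i))) :=
  dataflow_preservation_implies_same_outcomes_general R W π last last' wf init ρ ρ' hlt hlastW hloc
    hρ hρ' hcorr pass hpass
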